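/- For ellipses of unit area (ab = 1), the torsional rigidity-type quantity −∫_{E_{a,b}} ψ_{a,b} dx dy is maximized exactly when a = b = 1 (the disc): for all a, b > 0 with ab = 1, −∫ ψ_{a,b} ≤ −∫ ψ_{1,1}, with equality iff a = b = 1. -/

import Mathlib

open MeasureTheory

noncomputable def ellipseMap (a b : ℝ) (ha : a ≠ 0) (hb : b ≠ 0) : ℂ ≃ₗ[ℝ] ℂ where
  toFun z := ⟨a * z.re, b * z.im⟩
  invFun z := ⟨z.re / a, z.im / b⟩
  map_add' z w := by apply Complex.ext <;> simp [mul_add]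
  map_smul' r z := by apply Complex.ext <;> simp [Complex.smul_re, Complex.smul_im] <;> ring
  left_inv z := by apply Complex.ext <;> field_simp
  right_inv z := by apply Complex.ext <;> field_simp

lemma ellipseMap_det (a b : ℝ) (ha : a ≠ 0) (hb : b ≠ 0) :
    LinearMap.det ((ellipseMap a b ha hb : ℂ ≃ₗ[ℝ] ℂ) : ℂ →ₗ[ℝ] ℂ) = a * b := by
  rw [← LinearMap.det_toMatrix Complex.basisOneI]
  rw [Matrix.det_fin_two]
  simp [LinearMap.toMatrix_apply, Complex.coe_basisOneI_repr, ellipseMap]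

lemma unit_disc_integral_neg :
    (∫ z in {z : ℂ | z.re ^ 2 + z.im ^ 2 < 1}, (z.re ^ 2 + z.im ^ 2 - 1)) < 0 := by
  set S : Set ℂ := {z : ℂ | z.re ^ 2 + z.im ^ 2 < 1} with hS
  have hcont : Continuous fun z : ℂ => 1 - (z.re ^ 2 + z.im ^ 2) := by fun_prop
  have hSball : S ⊆ Metric.closedBall (0 : ℂ) 1 := by
    intro z hz
    simp only [Metric.mem_closedBall, Complex.dist_eq, sub_zero]
    have h1 : ‖z‖ ^ 2 ≤ 1 := by
      rw [Complex.sq_norm, Complex.normSq_apply]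
      have hz1 : z.re ^ 2 + z.im ^ 2 < 1 := hz
      nlinarith [sq_nonneg z.re, sq_nonneg z.im]
    nlinarith [norm_nonneg z]
  have hSopen : IsOpen S := by
    have : Continuous fun z : ℂ => z.re ^ 2 + z.im ^ 2 := by fun_prop
    exact isOpen_lt this continuous_const
  have hSm : MeasurableSet S := hSopen.measurableSet
  have hint : IntegrableOn (fun z : ℂ => 1 - (z.re ^ 2 + z.im ^ 2)) S := by
    refine (hcont.continuousOn.integrableOn_compact (isCompact_closedBall 0 1)).mono_set hSball
  have hpos : 0 < ∫ z in S, (1 - (z.re ^ 2 + z.im ^ 2)) := by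
    rw [setIntegral_pos_iff_support_of_nonneg_ae]
    · have hsub : S ⊆ Function.support (fun z : ℂ => 1 - (z.re ^ 2 + z.im ^ 2)) ∩ S := by
        intro z hz
        have hz' : z.re ^ 2 + z.im ^ 2 < 1 := hz
        have hne : (1 : ℝ) - (z.re ^ 2 + z.im ^ 2) ≠ 0 := by nlinarith
        exact ⟨hne, hz⟩
      refine lt_of_lt_of_le ?_ (measure_mono hsub)
      refine hSopen.measure_pos volume ⟨0, ?_⟩
      simp [hS]
    · filter_upwards [ae_restrict_mem hSm] with z hz
      have : z.re ^ 2 + z.im ^ 2 < 1 := hz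
      show (0 : ℝ) ≤ 1 - (z.re ^ 2 + z.im ^ 2)
      nlinarith
    · exact hint
  have : (∫ z in S, (z.re ^ 2 + z.im ^ 2 - 1)) = -∫ z in S, (1 - (z.re ^ 2 + z.im ^ 2)) := by
    rw [← integral_neg]; congr 1; ext z; ring
  rw [this]; linarith

lemma ellipse_integral_eq (a b : ℝ) (ha : 0 < a) (hb : 0 < b) (hab : a * b = 1) :
    (∫ z in {z : ℂ | z.re ^ 2 / a ^ 2 + z.im ^ 2 / b ^ 2 < 1},
        (z.re ^ 2 / a ^ 2 + z.im ^ 2 / b ^ 2 - 1)) =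
      ∫ z in {z : ℂ | z.re ^ 2 + z.im ^ 2 < 1}, (z.re ^ 2 + z.im ^ 2 - 1) := by
  have ha' := ha.ne'
  have hb' := hb.ne'
  set e := ellipseMap a b ha' hb' with he
  have hdet : LinearMap.det ((e : ℂ ≃ₗ[ℝ] ℂ) : ℂ →ₗ[ℝ] ℂ) = 1 := by
    rw [ellipseMap_det a b ha' hb', hab]
  have hmp : MeasurePreserving (⇑e) volume volume := by
    refine ⟨(e.toContinuousLinearEquiv : ℂ ≃L[ℝ] ℂ).continuous.measurable, ?_⟩
    have := Measure.map_linearMap_addHaar_eq_smul_addHaar (volume : Measure ℂ)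
      (f := ((e : ℂ ≃ₗ[ℝ] ℂ) : ℂ →ₗ[ℝ] ℂ)) (by rw [hdet]; norm_num)
    simpa [hdet] using this
  have hemb : MeasurableEmbedding (⇑e) :=
    (e.toContinuousLinearEquiv : ℂ ≃L[ℝ] ℂ).toHomeomorph.measurableEmbedding
  have himg : (⇑e) '' {z : ℂ | z.re ^ 2 + z.im ^ 2 < 1}
      = {z : ℂ | z.re ^ 2 / a ^ 2 + z.im ^ 2 / b ^ 2 < 1} := by
    ext w
    constructor
    · rintro ⟨z, hz, rfl⟩
      have : z.re ^ 2 + z.im ^ 2 < 1 := hz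
      show ((⟨a * z.re, b * z.im⟩ : ℂ)).re ^ 2 / a ^ 2 + _ / b ^ 2 < 1
      simp only [ellipseMap, LinearEquiv.coe_mk] at *
      show (a * z.re) ^ 2 / a ^ 2 + (b * z.im) ^ 2 / b ^ 2 < 1
      have heq : (a * z.re) ^ 2 / a ^ 2 + (b * z.im) ^ 2 / b ^ 2 = z.re ^ 2 + z.im ^ 2 := by
        field_simp
      rw [heq]; exact this
    · intro hw
      refine ⟨⟨w.re / a, w.im / b⟩, ?_, ?_⟩
      · show (w.re / a) ^ 2 + (w.im / b) ^ 2 < 1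
        have : w.re ^ 2 / a ^ 2 + w.im ^ 2 / b ^ 2 < 1 := hw
        rw [div_pow, div_pow]
        exact this
      · show (⟨a * (w.re / a), b * (w.im / b)⟩ : ℂ) = w
        apply Complex.ext <;> field_simp
  rw [← himg, hmp.setIntegral_image_emb hemb]
  apply setIntegral_congr_fun
  · exact (isOpen_lt (by fun_prop) continuous_const).measurableSet
  · intro z hz
    show (a * z.re) ^ 2 / a ^ 2 + (b * z.im) ^ 2 / b ^ 2 - 1 = z.re ^ 2 + z.im ^ 2 - 1
    have heq : (a * z.re) ^ 2 / a ^ 2 + (b * z.im) ^ 2 / b ^ 2 = z.re ^ 2 + z.im ^ 2 := by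
      field_simp
    rw [heq]

/-- Among ellipses of unit area (`ab = 1`), the quantity
`-∫_{E_{a,b}} ψ_{a,b}` (where `ψ_{a,b}` is the explicit torsion function of the
ellipse) is maximized exactly by the disc `a = b = 1`. -/
theorem ellipse_torsion_maximized_by_disc
    (a b : ℝ) (ha : 0 < a) (hb : 0 < b) (hab : a * b = 1)
    (E : ℝ → ℝ → Set ℂ)
    (hE : ∀ a' b', E a' b' = {z : ℂ | z.re ^ 2 / a' ^ 2 + z.im ^ 2 / b' ^ 2 < 1})
    (ψ : ℝ → ℝ → ℂ → ℝ)
    (hψ : ∀ a' b' (z : ℂ),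
      ψ a' b' z = (z.re ^ 2 / a' ^ 2 + z.im ^ 2 / b' ^ 2 - 1) / (2 / a' ^ 2 + 2 / b' ^ 2)) :
    (-(∫ z in E a b, ψ a b z) ≤ -(∫ z in E 1 1, ψ 1 1 z)) ∧
      ((-(∫ z in E a b, ψ a b z) = -(∫ z in E 1 1, ψ 1 1 z)) ↔ (a = 1 ∧ b = 1)) := by
  have ha' := ha.ne'
  have hb' := hb.ne'
  set J := ∫ z in {z : ℂ | z.re ^ 2 + z.im ^ 2 < 1}, (z.re ^ 2 + z.im ^ 2 - 1) with hJ
  have hJneg : J < 0 := unit_disc_integral_neg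
  set c : ℝ := 2 / a ^ 2 + 2 / b ^ 2 with hc
  have hcpos : 0 < c := by positivity
  have hab2 : a ^ 2 * b ^ 2 = 1 := by nlinarith
  have hc4 : c - 4 = 2 * (a - b) ^ 2 := by
    have h1 : (2 : ℝ) / a ^ 2 = 2 * b ^ 2 := by
      rw [div_eq_iff (pow_ne_zero 2 ha')]; nlinarith
    have h2 : (2 : ℝ) / b ^ 2 = 2 * a ^ 2 := by
      rw [div_eq_iff (pow_ne_zero 2 hb')]; nlinarith
    rw [hc, h1, h2]; nlinarith
  have hcge : 4 ≤ c := by nlinarith [sq_nonneg (a - b)]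
  have hIab : (∫ z in E a b, ψ a b z) = J / c := by
    rw [hE, ]
    have : ∀ z : ℂ, ψ a b z = (z.re ^ 2 / a ^ 2 + z.im ^ 2 / b ^ 2 - 1) / c := fun z => hψ a b z
    simp_rw [this]
    rw [integral_div, ellipse_integral_eq a b ha hb hab]
  have hI11 : (∫ z in E 1 1, ψ 1 1 z) = J / 4 := by
    rw [hE]
    have : ∀ z : ℂ, ψ 1 1 z = (z.re ^ 2 + z.im ^ 2 - 1) / 4 := by
      intro z; rw [hψ]; norm_num
    simp_rw [this]
    rw [integral_div]
    norm_num
    exact hJ.symm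
  rw [hIab, hI11]
  constructor
  · rw [neg_div' , neg_div', div_le_div_iff₀ hcpos (by norm_num)]
    nlinarith
  · constructor
    · intro h
      rw [neg_div', neg_div', div_eq_div_iff hcpos.ne' (by norm_num : (4:ℝ) ≠ 0)] at h
      have hceq : c = 4 := by
        have : -J * 4 = -J * c := h
        have hJne : -J ≠ 0 := by linarith
        exact (mul_left_cancel₀ hJne this).symm
      have habeq : a = b := by nlinarith
      have ha1 : a = 1 := by nlinarith
      exact ⟨ha1, by nlinarith⟩
    · rintro ⟨rfl, rfl⟩
      norm_num [hc]
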